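/- Let H be the complete bipartite graph K_{2,4} and let G be obtained from H by subdividing every edge exactly ℓ - 1 times, for an integer ℓ ≥ 1. Then G is 2-connected, has n = 8ℓ - 2 vertices, and pe(G) = ℓ = (n+2)/8. -/

import Mathlib

open SimpleGraph

variable {V : Type*} [Fintype V] [DecidableEq V]

/-- Distance from a vertex `u` to the vertex set of a walk `P`. -/
noncomputable def walkDist (G : SimpleGraph V) {a b : V} (P : G.Walk a b) (u : V) : ℕ :=
  P.support.toFinset.inf' ⟨a, List.mem_toFinset.mpr P.start_mem_support⟩ (fun x => G.dist u x)

/-- Eccentricity of a walk: max distance from any vertex of `G` to the walk. -/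
noncomputable def eccW (G : SimpleGraph V) {a b : V} (P : G.Walk a b) : ℕ :=
  Finset.univ.sup (walkDist G P)

/-- Path eccentricity of a graph. -/
noncomputable def pe (G : SimpleGraph V) : ℕ :=
  sInf {m | ∃ (a b : V) (P : G.Walk a b), P.IsPath ∧ eccW G P = m}

/-- `P` is a longest path in `G`. -/
def IsLongestPath (G : SimpleGraph V) {a b : V} (P : G.Walk a b) : Prop :=
  P.IsPath ∧ ∀ (c d : V) (Q : G.Walk c d), Q.IsPath → Q.length ≤ P.length

/-- `G` is `k`-connected. -/
def KConnected (k : ℕ) (G : SimpleGraph V) : Prop :=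
  k + 1 ≤ Fintype.card V ∧
    ∀ S : Finset V, S.card < k → (G.induce ((↑S : Set V)ᶜ)).Connected

/-- Adjacency relation of the graph obtained from `K_{2,4}` (parts `Fin 2` and `Fin 4`)
by subdividing every edge exactly `ℓ - 1` times: the edge between `a : Fin 2` and
`b : Fin 4` is replaced by the path `a, (a,b,0), …, (a,b,ℓ-2), b`
(when `ℓ = 1` it is kept as a direct edge). -/
def subdivK24Rel (ℓ : ℕ) :
    (Fin 2 ⊕ Fin 4) ⊕ (Fin 2 × Fin 4 × Fin (ℓ - 1)) →
    (Fin 2 ⊕ Fin 4) ⊕ (Fin 2 × Fin 4 × Fin (ℓ - 1)) → Prop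
  | Sum.inl (Sum.inl _), Sum.inl (Sum.inr _) => ℓ = 1
  | Sum.inl (Sum.inl a), Sum.inr (a', _, j) => a = a' ∧ j.val = 0
  | Sum.inl (Sum.inr b), Sum.inr (_, b', j) => b = b' ∧ j.val + 1 = ℓ - 1
  | Sum.inr (a, b, j), Sum.inr (a', b', j') => a = a' ∧ b = b' ∧ j'.val = j.val + 1
  | _, _ => False

/-!
Write `thread a b i` (`0 ≤ i ≤ ℓ`) for the subdivided edge from `x_a` to `y_b`. Every vertex lies
on a thread within distance `ℓ` of its `x`, so the path `x₀ … y₀ … x₁` has eccentricity at most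
`ℓ`. Conversely, a path meets `x₀` and `x₁` at most once each and between such visits stays in
one component of `G - {x₀, x₁}`; there are four of these, one around each `y_b`, so the path
misses one of them, and a `1`-Lipschitz potential shows that its `y_b` is at distance at least
`ℓ` from everything outside it. For 2-connectivity, after deleting a vertex `w` every vertex
follows its thread away from `w` to some `x_a`, and `x₀, x₁` are joined through any `y_b` whose
two threads avoid `w`.
-/

namespace SimpleGraph

variable {α : Type*} {G : SimpleGraph α}

theorem exists_walk_support_eq_map_range' {f : ℕ → α} {m n : ℕ} (hmn : m ≤ n)
    (hf : ∀ i, m ≤ i → i < n → G.Adj (f i) (f (i + 1))) :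
    ∃ p : G.Walk (f m) (f n), p.support = (List.range' m (n + 1 - m)).map f := by
  induction n, hmn using Nat.le_induction with
  | base => exact ⟨.nil, by simp⟩
  | succ n hmn ih =>
    obtain ⟨p, hp⟩ := ih fun i hmi hin => hf i hmi (by omega)
    refine ⟨p.concat (hf n hmn (by omega)), ?_⟩
    rw [Walk.support_concat, hp, show n + 1 + 1 - m = n + 1 - m + 1 by omega,
      List.range'_1_concat, List.map_append, show m + (n + 1 - m) = n + 1 by omega]
    rfl

theorem dist_le_of_adj_succ {f : ℕ → α} {m n : ℕ} (hmn : m ≤ n)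
    (hf : ∀ i, m ≤ i → i < n → G.Adj (f i) (f (i + 1))) : G.dist (f m) (f n) ≤ n - m := by
  obtain ⟨p, hp⟩ := exists_walk_support_eq_map_range' hmn hf
  have hlen := congrArg List.length hp
  rw [Walk.length_support, List.length_map, List.length_range'] at hlen
  exact (dist_le p).trans (by omega)

theorem induce_reachable_of_adj_succ {s : Set α} {f : ℕ → α} {m n : ℕ} (hmn : m ≤ n)
    (hf : ∀ i, m ≤ i → i < n → G.Adj (f i) (f (i + 1))) (hs : ∀ i, m ≤ i → i ≤ n → f i ∈ s)
    {u v : s} (hu : f m = u) (hv : f n = v) : (G.induce s).Reachable u v := by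
  obtain ⟨p, hp⟩ := exists_walk_support_eq_map_range' hmn hf
  have hps : ∀ x ∈ p.support, x ∈ s := by
    rw [hp]
    rintro _ hx
    obtain ⟨i, hi, rfl⟩ := List.mem_map.mp hx
    rw [List.mem_range'_1] at hi
    exact hs i hi.1 (by omega)
  obtain rfl : u = ⟨f m, hs m le_rfl hmn⟩ := Subtype.ext hu.symm
  obtain rfl : v = ⟨f n, hs n hmn le_rfl⟩ := Subtype.ext hv.symm
  exact ⟨p.induce s hps⟩

theorem Walk.le_add_length_of_adj {f : α → ℕ} (hf : ∀ u v, G.Adj u v → f v ≤ f u + 1) :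
    ∀ {u v : α} (p : G.Walk u v), f v ≤ f u + p.length
  | _, _, .nil => by simp
  | _, _, .cons h p => by
    have := hf _ _ h
    have := p.le_add_length_of_adj hf
    rw [Walk.length_cons]
    omega

theorem Reachable.le_add_dist_of_adj {f : α → ℕ} (hf : ∀ u v, G.Adj u v → f v ≤ f u + 1)
    {u v : α} (h : G.Reachable u v) : f v ≤ f u + G.dist u v := by
  obtain ⟨p, hp⟩ := h.exists_walk_length_eq_dist
  exact hp ▸ p.le_add_length_of_adj hf

end SimpleGraph

theorem List.card_toLeft_toFinset_le_countP_isRight_add_one {α β : Type*} [DecidableEq α]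
    [DecidableEq β] :
    ∀ {l : List (α ⊕ β)}, l.IsChain (fun x y => x.isLeft → y.isLeft → x = y) →
      l.toFinset.toLeft.card ≤ l.countP Sum.isRight + 1
  | [], _ | [.inl _], _ => Finset.card_toLeft_le.trans (by simp)
  | .inr b :: l, h => by
    have := card_toLeft_toFinset_le_countP_isRight_add_one h.of_cons
    simp only [toFinset_cons, Finset.toLeft_insert_inr, countP_cons, Sum.isRight_inr, if_true]
    omega
  | .inl a :: .inl a' :: l, h => by
    have := card_toLeft_toFinset_le_countP_isRight_add_one h.of_cons
    obtain rfl : a = a' := by simpa using (isChain_cons_cons.mp h).1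
    simpa using this
  | .inl a :: .inr b :: l, h => by
    have := card_toLeft_toFinset_le_countP_isRight_add_one h.of_cons.of_cons
    have := Finset.card_insert_le a l.toFinset.toLeft
    simp only [toFinset_cons, Finset.toLeft_insert_inl, Finset.toLeft_insert_inr, countP_cons,
      Sum.isRight_inl, Sum.isRight_inr, if_true, Bool.false_eq_true, if_false]
    omega

section PathEccentricity

variable {G : SimpleGraph V} {a b : V}

theorem le_eccW_of_forall_le_dist (P : G.Walk a b) {k : ℕ} (u : V)
    (h : ∀ x ∈ P.support, k ≤ G.dist u x) : k ≤ eccW G P :=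
  (Finset.le_inf' _ _ fun x hx => h x (List.mem_toFinset.mp hx)).trans
    (Finset.le_sup (f := walkDist G P) (Finset.mem_univ u))

theorem eccW_le_of_forall_exists_dist_le (P : G.Walk a b) {k : ℕ}
    (h : ∀ u, ∃ x ∈ P.support, G.dist u x ≤ k) : eccW G P ≤ k :=
  Finset.sup_le fun u _ =>
    let ⟨_, hx, hux⟩ := h u
    (Finset.inf'_le _ (List.mem_toFinset.mpr hx)).trans hux

theorem pe_eq_of_forall_le_eccW {k : ℕ}
    (hle : ∀ (a b : V) (P : G.Walk a b), P.IsPath → k ≤ eccW G P)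
    (hex : ∃ (a b : V) (P : G.Walk a b), P.IsPath ∧ eccW G P ≤ k) : pe G = k := by
  obtain ⟨a, b, P, hP, hPk⟩ := hex
  have hmem : eccW G P ∈ {m | ∃ (a b : V) (P : G.Walk a b), P.IsPath ∧ eccW G P = m} :=
    ⟨a, b, P, hP, rfl⟩
  refine le_antisymm ((Nat.sInf_le hmem).trans hPk) (le_csInf ⟨_, hmem⟩ ?_)
  rintro m ⟨a, b, Q, hQ, rfl⟩
  exact hle a b Q hQ

end PathEccentricity

namespace SubdivK24

abbrev Vert (ℓ : ℕ) := (Fin 2 ⊕ Fin 4) ⊕ (Fin 2 × Fin 4 × Fin (ℓ - 1))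

abbrev graph (ℓ : ℕ) : SimpleGraph (Vert ℓ) := fromRel (subdivK24Rel ℓ)

def xVert (ℓ : ℕ) (a : Fin 2) : Vert ℓ := .inl (.inl a)

def yVert (ℓ : ℕ) (b : Fin 4) : Vert ℓ := .inl (.inr b)

def thread (ℓ : ℕ) (a : Fin 2) (b : Fin 4) (i : ℕ) : Vert ℓ :=
  if h₀ : i = 0 then xVert ℓ a else if h : i < ℓ then .inr (a, b, ⟨i - 1, by omega⟩) else yVert ℓ b

variable {ℓ : ℕ} {a a' : Fin 2} {b b' : Fin 4} {i i' : ℕ}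

@[simp] theorem thread_zero : thread ℓ a b 0 = xVert ℓ a := rfl

theorem thread_self (hℓ : 1 ≤ ℓ) : thread ℓ a b ℓ = yVert ℓ b := by
  simp [thread, show ℓ ≠ 0 by omega]

theorem thread_adj_succ (hi : i < ℓ) : (graph ℓ).Adj (thread ℓ a b i) (thread ℓ a b (i + 1)) := by
  rw [fromRel_adj]
  unfold thread
  split_ifs <;> simp_all [xVert, yVert, subdivK24Rel] <;> omega

theorem exists_thread_eq (hℓ : 1 ≤ ℓ) (v : Vert ℓ) : ∃ a b i, i ≤ ℓ ∧ thread ℓ a b i = v := by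
  rcases v with (a | b) | ⟨a, b, j⟩
  · exact ⟨a, 0, 0, by omega, rfl⟩
  · exact ⟨0, b, ℓ, le_rfl, thread_self hℓ⟩
  · refine ⟨a, b, j + 1, by omega, ?_⟩
    simp [thread, show (j : ℕ) + 1 < ℓ by omega]

theorem thread_eq_thread (hi : i ≤ ℓ) (hi' : i' ≤ ℓ) (h : thread ℓ a b i = thread ℓ a' b' i') :
    i = i' ∧ (i < ℓ → a = a') ∧ (0 < i → b = b') := by
  unfold thread at h
  split_ifs at h <;> simp_all [xVert, yVert, Fin.ext_iff] <;> omega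

theorem dist_xVert_thread_le (hi : i ≤ ℓ) : (graph ℓ).dist (xVert ℓ a) (thread ℓ a b i) ≤ i :=
  dist_le_of_adj_succ (f := thread ℓ a b) (Nat.zero_le i) fun _ _ hj => thread_adj_succ (by omega)

section TwoConnected

variable {s : Set (Vert ℓ)} {w : Vert ℓ}

theorem induce_reachable_thread {m n : ℕ} (hmn : m ≤ n) (hn : n ≤ ℓ)
    (hs : ∀ j, m ≤ j → j ≤ n → thread ℓ a b j ∈ s) {u v : s}
    (hu : thread ℓ a b m = u) (hv : thread ℓ a b n = v) : ((graph ℓ).induce s).Reachable u v :=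
  induce_reachable_of_adj_succ hmn (fun j _ hj => thread_adj_succ (i := j) (by omega)) hs hu hv

variable (hs : ∀ v, v ≠ w → v ∈ s)
include hs

theorem eq_of_notMem {v : Vert ℓ} (hv : v ∉ s) : v = w := not_not.mp (mt (hs v) hv)

theorem exists_xVert_mem : ∃ a, xVert ℓ a ∈ s := by
  by_cases h : xVert ℓ 0 = w
  · exact ⟨1, hs _ (h ▸ by simp [xVert])⟩
  · exact ⟨0, hs _ h⟩

theorem exists_thread_subset (hℓ : 1 ≤ ℓ) :
    ∃ b, ∀ a, xVert ℓ a ∈ s → ∀ j ≤ ℓ, thread ℓ a b j ∈ s := by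
  obtain ⟨a₀, b₀, k, hk, hw⟩ := exists_thread_eq hℓ w
  refine ⟨b₀ + 1, fun a ha j hj => ?_⟩
  by_contra hjs
  obtain ⟨rfl, -, hb⟩ := thread_eq_thread hj hk ((eq_of_notMem hs hjs).trans hw.symm)
  rcases Nat.eq_zero_or_pos j with rfl | hj₀
  · exact hjs ha
  · exact absurd (hb hj₀) (by simp)

theorem induce_reachable_xVert (hℓ : 1 ≤ ℓ) {u v : s} (hu : ↑u = xVert ℓ a)
    (hv : ↑v = xVert ℓ a') : ((graph ℓ).induce s).Reachable u v := by
  obtain ⟨b, hb⟩ := exists_thread_subset hs hℓ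
  have hau := hb a (hu ▸ u.2)
  let y : s := ⟨yVert ℓ b, thread_self hℓ ▸ hau ℓ le_rfl⟩
  exact (induce_reachable_thread (v := y) (Nat.zero_le ℓ) le_rfl (fun j _ => hau j) hu.symm
    (thread_self hℓ)).trans (induce_reachable_thread (Nat.zero_le ℓ) le_rfl
      (fun j _ => hb a' (hv ▸ v.2) j) hv.symm (thread_self hℓ)).symm

theorem exists_induce_reachable_xVert (hℓ : 1 ≤ ℓ) (v : s) :
    ∃ u : s, (∃ a, ↑u = xVert ℓ a) ∧ ((graph ℓ).induce s).Reachable v u := by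
  obtain ⟨a, b, i, hi, hv⟩ := exists_thread_eq hℓ (v : Vert ℓ)
  by_cases hdown : ∀ j ≤ i, thread ℓ a b j ∈ s
  · exact ⟨⟨xVert ℓ a, hdown 0 (Nat.zero_le i)⟩, ⟨a, rfl⟩,
      (induce_reachable_thread (Nat.zero_le i) hi (fun j _ => hdown j) rfl hv).symm⟩
  -- `w` cuts the thread below `v`, so `v` escapes through `y_b` and the other thread into `y_b`.
  push Not at hdown
  obtain ⟨k, hki, hks⟩ := hdown
  have hkw := eq_of_notMem hs hks
  have hki' : k < i := lt_of_le_of_ne hki fun h => hks (h ▸ hv ▸ v.2)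
  have hup : ∀ j, i ≤ j → j ≤ ℓ → thread ℓ a b j ∈ s := fun j hij hj => by
    by_contra hjs
    have := (thread_eq_thread hj (hki.trans hi) ((eq_of_notMem hs hjs).trans hkw.symm)).1
    omega
  have hother : ∀ j ≤ ℓ, thread ℓ (a + 1) b j ∈ s := fun j hj => by
    by_contra hjs
    obtain ⟨rfl, ha, -⟩ :=
      thread_eq_thread hj (hki.trans hi) ((eq_of_notMem hs hjs).trans hkw.symm)
    exact absurd (ha (by omega)) (by simp)
  let y : s := ⟨yVert ℓ b, thread_self hℓ ▸ hup ℓ hi le_rfl⟩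
  exact ⟨⟨xVert ℓ (a + 1), hother 0 (Nat.zero_le ℓ)⟩, ⟨a + 1, rfl⟩,
    (induce_reachable_thread (v := y) hi le_rfl hup hv (thread_self hℓ)).trans
      (induce_reachable_thread (Nat.zero_le ℓ) le_rfl (fun j _ => hother j) rfl
        (thread_self hℓ)).symm⟩

theorem induce_connected (hℓ : 1 ≤ ℓ) : ((graph ℓ).induce s).Connected := by
  obtain ⟨a, ha⟩ := exists_xVert_mem hs
  rw [connected_iff_exists_forall_reachable]
  refine ⟨⟨xVert ℓ a, ha⟩, fun v => ?_⟩
  obtain ⟨u, ⟨a', hu⟩, hvu⟩ := exists_induce_reachable_xVert hs hℓ v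
  exact (induce_reachable_xVert hs hℓ rfl hu).trans hvu.symm

end TwoConnected

theorem card_vert (hℓ : 1 ≤ ℓ) : Fintype.card (Vert ℓ) = 8 * ℓ - 2 := by
  simp only [Fintype.card_sum, Fintype.card_prod, Fintype.card_fin]
  omega

theorem kConnected_two (hℓ : 1 ≤ ℓ) : KConnected 2 (graph ℓ) := by
  refine ⟨by rw [card_vert hℓ]; omega, fun S hS => ?_⟩
  obtain ⟨w, hw⟩ := Finset.card_le_one_iff_subset_singleton.mp (Nat.le_of_lt_succ hS)
  exact induce_connected (w := w) (fun v hv hvS => hv (Finset.mem_singleton.mp (hw hvS))) hℓ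

theorem connected (hℓ : 1 ≤ ℓ) : (graph ℓ).Connected :=
  (graph ℓ).induceUnivIso.connected_iff.mp
    (induce_connected (w := xVert ℓ 0) (fun v _ => Set.mem_univ v) hℓ)

/-- Deleting `x₀, x₁` leaves four components, one around each `y_b`; `block` names the component
of a vertex, or the deleted vertex itself. -/
def block : Vert ℓ → Fin 4 ⊕ Fin 2
  | .inl (.inl a) => .inr a
  | .inl (.inr b) => .inl b
  | .inr (_, b, _) => .inl b

/-- `min ℓ (dist (yVert ℓ b) v)`. -/
def potential (b : Fin 4) : Vert ℓ → ℕ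
  | .inl (.inl _) => ℓ
  | .inl (.inr b') => if b' = b then 0 else ℓ
  | .inr (_, b', j) => if b' = b then ℓ - 1 - j else ℓ

theorem block_eq_of_adj {u v : Vert ℓ} (h : (graph ℓ).Adj u v) (hu : (block u).isLeft)
    (hv : (block v).isLeft) : block u = block v := by
  rw [fromRel_adj] at h
  rcases u with (_ | _) | ⟨_, _, _⟩ <;> rcases v with (_ | _) | ⟨_, _, _⟩ <;>
    grind [block, subdivK24Rel]

theorem potential_le_succ_of_adj (b : Fin 4) {u v : Vert ℓ} (h : (graph ℓ).Adj u v) :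
    potential b v ≤ potential b u + 1 := by
  rw [fromRel_adj] at h
  rcases u with (_ | _) | ⟨_, _, j⟩ <;> rcases v with (_ | _) | ⟨_, _, j'⟩ <;>
    simp_all [potential, subdivK24Rel] <;> split_ifs <;> omega

theorem potential_eq_of_block_ne {b : Fin 4} {v : Vert ℓ} (h : block v ≠ .inl b) :
    potential b v = ℓ := by
  rcases v with (_ | _) | ⟨_, _, _⟩ <;> simp_all [block, potential]

theorem le_dist_yVert_of_block_ne (hℓ : 1 ≤ ℓ) {b : Fin 4} {v : Vert ℓ} (h : block v ≠ .inl b) :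
    ℓ ≤ (graph ℓ).dist (yVert ℓ b) v := by
  have := ((connected hℓ).preconnected (yVert ℓ b) v).le_add_dist_of_adj
    (fun _ _ => potential_le_succ_of_adj b)
  rwa [potential_eq_of_block_ne h, show potential b (yVert ℓ b) = 0 by simp [potential, yVert],
    zero_add] at this

theorem countP_isRight_map_block_le {u v : Vert ℓ} {P : (graph ℓ).Walk u v} (hP : P.IsPath) :
    (P.support.map block).countP Sum.isRight ≤ 2 := by
  rw [List.countP_map, List.countP_eq_length_filter,
    ← List.toFinset_card_of_nodup (hP.support_nodup.filter _)]
  refine (Finset.card_le_card (t := Finset.univ.image (xVert ℓ)) fun x hx => ?_).trans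
    (Finset.card_image_le.trans (by simp))
  rw [List.mem_toFinset, List.mem_filter] at hx
  rcases x with (a | _) | ⟨_, _, _⟩ <;> simp_all [block, xVert]

theorem exists_block_notMem_support {u v : Vert ℓ} {P : (graph ℓ).Walk u v} (hP : P.IsPath) :
    ∃ b, ∀ x ∈ P.support, block x ≠ .inl b := by
  have hchain : (P.support.map block).IsChain (fun x y => x.isLeft → y.isLeft → x = y) :=
    List.isChain_map_of_isChain _ (fun _ _ => block_eq_of_adj) P.isChain_adj_support
  have hcard := (List.card_toLeft_toFinset_le_countP_isRight_add_one hchain).trans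
    (Nat.succ_le_succ (countP_isRight_map_block_le hP))
  obtain ⟨b, -, hb⟩ := Finset.exists_mem_notMem_of_card_lt_card
    (s := (P.support.map block).toFinset.toLeft) (t := Finset.univ)
    (by rw [Finset.card_univ, Fintype.card_fin]; omega)
  refine ⟨b, fun x hx hxb => hb ?_⟩
  rw [Finset.mem_toLeft, List.mem_toFinset, List.mem_map]
  exact ⟨x, hx, hxb⟩

theorem le_eccW (hℓ : 1 ≤ ℓ) {u v : Vert ℓ} {P : (graph ℓ).Walk u v} (hP : P.IsPath) :
    ℓ ≤ eccW (graph ℓ) P := by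
  obtain ⟨b, hb⟩ := exists_block_notMem_support hP
  exact le_eccW_of_forall_le_dist P (yVert ℓ b) fun x hx => le_dist_yVert_of_block_ne hℓ (hb x hx)

def spine (ℓ i : ℕ) : Vert ℓ := if i ≤ ℓ then thread ℓ 0 0 i else thread ℓ 1 0 (2 * ℓ - i)

theorem spine_zero : spine ℓ 0 = xVert ℓ 0 := by simp [spine]

theorem spine_two_mul (hℓ : 1 ≤ ℓ) : spine ℓ (2 * ℓ) = xVert ℓ 1 := by
  simp [spine, show ¬2 * ℓ ≤ ℓ by omega]

theorem spine_adj_succ (hℓ : 1 ≤ ℓ) (hi : i < 2 * ℓ) :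
    (graph ℓ).Adj (spine ℓ i) (spine ℓ (i + 1)) := by
  unfold spine
  split_ifs with h h'
  · exact thread_adj_succ (by omega)
  · have := thread_adj_succ (ℓ := ℓ) (a := 1) (b := 0) (i := ℓ - 1) (by omega)
    rw [Nat.sub_add_cancel hℓ, thread_self hℓ] at this
    rw [show i = ℓ by omega, thread_self hℓ, show 2 * ℓ - (ℓ + 1) = ℓ - 1 by omega]
    exact this.symm
  · omega
  · have := thread_adj_succ (ℓ := ℓ) (a := 1) (b := 0) (i := 2 * ℓ - (i + 1)) (by omega)
    rw [show 2 * ℓ - (i + 1) + 1 = 2 * ℓ - i by omega] at this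
    exact this.symm

theorem eq_of_spine_eq (hi : i ≤ 2 * ℓ) (hi' : i' ≤ 2 * ℓ) (h : spine ℓ i = spine ℓ i') :
    i = i' := by
  unfold spine at h
  split_ifs at h with h₁ h₂ h₂
  · exact (thread_eq_thread h₁ h₂ h).1
  · obtain ⟨hii', ha, -⟩ := thread_eq_thread h₁ (by omega) h
    have : ¬i < ℓ := fun hlt => absurd (ha hlt) (by decide)
    omega
  · obtain ⟨hii', ha, -⟩ := thread_eq_thread h₂ (by omega) h.symm
    have : ¬i' < ℓ := fun hlt => absurd (ha hlt) (by decide)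
    omega
  · have := (thread_eq_thread (by omega) (by omega) h).1
    omega

theorem exists_isPath_eccW_le (hℓ : 1 ≤ ℓ) :
    ∃ (u v : Vert ℓ) (P : (graph ℓ).Walk u v), P.IsPath ∧ eccW (graph ℓ) P ≤ ℓ := by
  obtain ⟨P, hP⟩ := exists_walk_support_eq_map_range' (f := spine ℓ) (Nat.zero_le (2 * ℓ))
    fun _ _ hi => spine_adj_succ hℓ hi
  have hx : ∀ a, xVert ℓ a ∈ P.support := by
    intro a
    fin_cases a
    · exact spine_zero ▸ P.start_mem_support
    · exact spine_two_mul hℓ ▸ P.end_mem_support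
  refine ⟨_, _, P, ?_, eccW_le_of_forall_exists_dist_le P fun u => ?_⟩
  · rw [Walk.isPath_def, hP]
    refine List.Nodup.map_on (fun i hi i' hi' h => eq_of_spine_eq ?_ ?_ h) List.nodup_range'
    all_goals
      rw [List.mem_range'_1] at *
      omega
  · obtain ⟨a, b, i, hi, rfl⟩ := exists_thread_eq hℓ u
    exact ⟨xVert ℓ a, hx a, dist_comm.trans_le ((dist_xVert_thread_le hi).trans hi)⟩

theorem pe_eq (hℓ : 1 ≤ ℓ) : pe (graph ℓ) = ℓ :=
  pe_eq_of_forall_le_eccW (fun _ _ _ hP => le_eccW hℓ hP) (exists_isPath_eccW_le hℓ)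

end SubdivK24

theorem stmt10 (ℓ : ℕ) (hℓ : 1 ≤ ℓ) :
    KConnected 2 (SimpleGraph.fromRel (subdivK24Rel ℓ)) ∧
    Fintype.card ((Fin 2 ⊕ Fin 4) ⊕ (Fin 2 × Fin 4 × Fin (ℓ - 1))) = 8 * ℓ - 2 ∧
    pe (SimpleGraph.fromRel (subdivK24Rel ℓ)) = ℓ ∧
    (pe (SimpleGraph.fromRel (subdivK24Rel ℓ)) : ℝ) =
      ((Fintype.card ((Fin 2 ⊕ Fin 4) ⊕ (Fin 2 × Fin 4 × Fin (ℓ - 1))) : ℝ) + 2) / 8 := by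
  have hpe := SubdivK24.pe_eq hℓ
  have hcard := SubdivK24.card_vert hℓ
  refine ⟨SubdivK24.kConnected_two hℓ, hcard, hpe, ?_⟩
  rw [hpe, hcard, Nat.cast_sub (by omega)]
  push_cast
  ring
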